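/- arXiv:1706.09154 — 2 statements merged into one kernel-verified Lean document; each statement's English description precedes it below -/
import Mathlib

section
/- The class F_c of finite fans equipped with downwards closed maximal chains, with chain-preserving epimorphisms, has the joint projection property and the amalgamation property: (JPP) for any (A,𝒞^A), (B,𝒞^B) ∈ F_c there exist (C,𝒞^C) ∈ F_c and epimorphisms in F_c from (C,𝒞^C) onto each of them; (AP) for any (A,𝒞^A), (B₁,𝒞^{B₁}), (B₂,𝒞^{B₂}) ∈ F_c and epimorphisms φ₁: (B₁,𝒞^{B₁}) → (A,𝒞^A) and φ₂: (B₂,𝒞^{B₂}) → (A,𝒞^A) in F_c, there exist (C,𝒞^C) ∈ F_c and epimorphisms ψ₁: (C,𝒞^C) → (B₁,𝒞^{B₁}) and ψ₂: (C,𝒞^C) → (B₂,𝒞^{B₂}) in F_c such that φ₁ ∘ ψ₁ = φ₂ ∘ ψ₂. -/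
/-- A finite fan: a finite poset with a least element (the root) such that the
set of predecessors of any element is linearly ordered, and the set of successors
of any non-root element is linearly ordered. -/
structure FiniteFan where
  carrier : Type
  fintype : Fintype carrier
  ord : PartialOrder carrier
  root : carrier
  root_le : ∀ a : carrier, ord.le root a
  down_chain : ∀ a x y : carrier, ord.le x a → ord.le y a → ord.le x y ∨ ord.le y x
  up_chain : ∀ a : carrier, a ≠ root →
    ∀ x y : carrier, ord.le a x → ord.le a y → ord.le x y ∨ ord.le y x

attribute [instance] FiniteFan.fintype

/-- `t` is an immediate successor of `s` in the fan `A`. -/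
def FiniteFan.covby (A : FiniteFan) (s t : A.carrier) : Prop :=
  A.ord.lt s t ∧ ∀ p : A.carrier, A.ord.lt s p → ¬ A.ord.lt p t

/-- The relation `R^A` : `R^A(s,t)` iff `s = t` or `t` is an immediate successor of `s`. -/
def FiniteFan.R (A : FiniteFan) (s t : A.carrier) : Prop :=
  s = t ∨ A.covby s t

/-- An epimorphism of finite fans: a surjection with `R^B(s,t) → R^A(φ s, φ t)`. -/
def FanEpi (B A : FiniteFan) (φ : B.carrier → A.carrier) : Prop :=
  Function.Surjective φ ∧ ∀ s t : B.carrier, B.R s t → A.R (φ s) (φ t)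

/-- A downwards closed subset of a finite fan. -/
def FiniteFan.DownClosed (A : FiniteFan) (C : Set A.carrier) : Prop :=
  ∀ x y : A.carrier, A.ord.le x y → y ∈ C → x ∈ C

/-- A downwards closed maximal chain on a finite fan: a family of downwards closed
subsets linearly ordered by inclusion, maximal among such families. -/
def DCMaxChain (A : FiniteFan) (𝒞 : Set (Set A.carrier)) : Prop :=
  (∀ C ∈ 𝒞, A.DownClosed C) ∧ IsChain (· ⊆ ·) 𝒞 ∧
  ∀ C : Set A.carrier, A.DownClosed C → IsChain (· ⊆ ·) (insert C 𝒞) → C ∈ 𝒞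

/-- An epimorphism in the class `F_c`: a fan epimorphism mapping the chain onto the chain. -/
def FcEpi (B A : FiniteFan) (𝒞B : Set (Set B.carrier)) (𝒞A : Set (Set A.carrier))
    (φ : B.carrier → A.carrier) : Prop :=
  FanEpi B A φ ∧ (Set.image φ) '' 𝒞B = 𝒞A

/-- A branch of a fan: a maximal linearly ordered subset. -/
def FiniteFan.IsBranch (A : FiniteFan) (b : Set A.carrier) : Prop :=
  IsChain A.ord.le b ∧ ∀ b' : Set A.carrier, IsChain A.ord.le b' → b ⊆ b' → b' = b

/-- The height of a finite fan: the maximal `n` such that some branch has `n+1` elements. -/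
noncomputable def FiniteFan.height (A : FiniteFan) : ℕ :=
  sSup {n : ℕ | ∃ b : Set A.carrier, A.IsBranch b ∧ b.ncard = n + 1}

/-- The width of a finite fan: the number of its branches. -/
noncomputable def FiniteFan.width (A : FiniteFan) : ℕ :=
  {b : Set A.carrier | A.IsBranch b}.ncard

/-- A chain on a finite fan is canonical if there is an enumeration `b₁,…,bₙ` of the
branches such that whenever `C` is in the chain and `C ∩ b_j ≠ ∅`, then `b_i ⊆ C`
for all `i < j`. -/
def Canonical (A : FiniteFan) (𝒞 : Set (Set A.carrier)) : Prop :=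
  ∃ (n : ℕ) (b : Fin n → Set A.carrier),
    (∀ i, A.IsBranch (b i)) ∧ Function.Injective b ∧
    (∀ b' : Set A.carrier, A.IsBranch b' → ∃ i, b' = b i) ∧
    ∀ C ∈ 𝒞, ∀ i j : Fin n, i < j → (C ∩ b j).Nonempty → b i ⊆ C

/-- Membership in the class `F_cc`: a downwards closed maximal chain which is canonical,
on a fan all of whose branches have the same height. -/
def Fcc (A : FiniteFan) (𝒞 : Set (Set A.carrier)) : Prop :=
  DCMaxChain A 𝒞 ∧ Canonical A 𝒞 ∧ ∃ k : ℕ, ∀ b : Set A.carrier, A.IsBranch b → b.ncard = k + 1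

/-!
A downwards closed maximal chain on a finite fan consists of the initial segments of an
enumeration of its points in which every point comes after the points below it; in particular
it grows one point at a time. Hence a surjection carries the chain of its domain onto the chain
of its codomain as soon as it maps every member of the former into the latter.

For the amalgamation we merge the enumerations of `B₁` and `B₂` into one list of pairs `(p, q)`
with `φ₁ p = φ₂ q`: a point whose image has already been reached is paired with an old point of
the other side, and two points with new images are paired with each other, since both images are
then the next point of `A`. Each pair is reached from the pair of roots by a walk that moves
along `R` in both coordinates and on which `φ₁` and `φ₂` agree. The amalgam `C` has one branch
per walk, and its chain reads the branches one after the other, so that either projection sees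
the points of its fan appear in the merged order. The joint projection property is amalgamation
over the one-point fan.
-/

attribute [instance] FiniteFan.ord

open Set Function

namespace FiniteFan

variable {A : FiniteFan}

theorem covby_iff {s t : A.carrier} : A.covby s t ↔ s ⋖ t := Iff.rfl

theorem R.le {s t : A.carrier} (h : A.R s t) : s ≤ t :=
  h.elim (·.le) (·.1.le)

theorem exists_covby_of_ne_root {b : A.carrier} (hb : b ≠ A.root) : ∃ p, A.covby p b :=
  exists_covBy_of_wellFoundedGT fun hmin => hb (hmin.eq_of_le (A.root_le b)).symm

theorem eq_of_covby_of_covby {p q b : A.carrier} (hp : A.covby p b) (hq : A.covby q b) :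
    p = q := by
  rcases A.down_chain b p q hp.1.le hq.1.le with h | h
  · exact h.eq_of_not_lt fun hpq => hp.2 q hpq hq.1
  · exact (h.eq_of_not_lt fun hqp => hq.2 p hqp hp.1).symm

theorem not_covby_root (s : A.carrier) : ¬ A.covby s A.root :=
  fun h => h.1.not_ge (A.root_le s)

end FiniteFan

theorem mem_of_subset_of_subset_insert {α : Type*} {𝒞 : Set (Set α)} {X Y : Set α} {a : α}
    (hX : X ∈ 𝒞) (haX : insert a X ∈ 𝒞) (hXY : X ⊆ Y) (hYX : Y ⊆ insert a X) : Y ∈ 𝒞 := by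
  by_cases ha : a ∈ Y
  · rwa [hYX.antisymm (insert_subset ha hXY)]
  · rwa [((subset_insert_iff_of_notMem ha).1 hYX).antisymm hXY]

namespace DCMaxChain

variable {A : FiniteFan} {𝒞 : Set (Set A.carrier)}

theorem empty_mem (h : DCMaxChain A 𝒞) : ∅ ∈ 𝒞 :=
  h.2.2 ∅ (fun _ _ _ h => h) (h.2.1.insert fun C _ _ => Or.inl (empty_subset C))

theorem univ_mem (h : DCMaxChain A 𝒞) : univ ∈ 𝒞 :=
  h.2.2 univ (fun _ _ _ _ => trivial) (h.2.1.insert fun C _ _ => Or.inr (subset_univ C))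

theorem exists_insert_mem (h : DCMaxChain A 𝒞) {S : Set A.carrier} (hS : S ∈ 𝒞)
    (hS_ne : S ≠ univ) : ∃ a ∉ S, insert a S ∈ 𝒞 := by
  obtain ⟨S', ⟨hS'𝒞, hSS'⟩, hS'min⟩ := (toFinite {D | D ∈ 𝒞 ∧ S ⊂ D}).exists_minimal
    ⟨univ, h.univ_mem, ssubset_univ_iff.2 hS_ne⟩
  obtain ⟨a, ⟨haS', haS⟩, hamin⟩ := (toFinite (S' \ S)).exists_minimal
    (nonempty_of_ssubset hSS')
  refine ⟨a, haS, h.2.2 _ ?_ (h.2.1.insert fun D hD _ => ?_)⟩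
  · rintro x y hxy (rfl | hyS)
    · by_contra hx
      have hxS : x ∉ S := fun hxS => hx (Or.inr hxS)
      exact hx (Or.inl (hxy.antisymm (hamin ⟨h.1 S' hS'𝒞 x _ hxy haS', hxS⟩ hxy)))
    · exact Or.inr (h.1 S hS x y hxy hyS)
  · rcases h.2.1.total hD hS with hDS | hSD
    · exact Or.inr (hDS.trans (subset_insert a S))
    · rcases hSD.eq_or_ssubset with rfl | hSD
      · exact Or.inr (subset_insert a _)
      · have hS'D : S' ⊆ D := (h.2.1.total hD hS'𝒞).elim (hS'min ⟨hD, hSD⟩) id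
        exact Or.inl ((insert_subset haS' hSS'.subset).trans hS'D)

theorem singleton_root_mem (h : DCMaxChain A 𝒞) : {A.root} ∈ 𝒞 := by
  obtain ⟨a, -, ha⟩ := h.exists_insert_mem h.empty_mem (@empty_ne_univ _ ⟨A.root⟩)
  rw [insert_empty_eq] at ha
  rwa [(h.1 _ ha A.root a (A.root_le a) rfl : A.root = a)]

end DCMaxChain

theorem FcEpi.map_root {A B : FiniteFan} {𝒞A : Set (Set A.carrier)} {𝒞B : Set (Set B.carrier)}
    {φ : B.carrier → A.carrier} (hA : DCMaxChain A 𝒞A) (hB : DCMaxChain B 𝒞B)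
    (hφ : FcEpi B A 𝒞B 𝒞A φ) : φ B.root = A.root := by
  have h : {φ B.root} ∈ 𝒞A := by
    rw [← hφ.2, ← image_singleton]
    exact mem_image_of_mem _ hB.singleton_root_mem
  exact (hA.1 _ h A.root _ (A.root_le _) rfl).symm

theorem image_image_eq_of_mapsTo {B C : FiniteFan} {𝒞B : Set (Set B.carrier)}
    {𝒞C : Set (Set C.carrier)} {ψ : C.carrier → B.carrier} (hC : DCMaxChain C 𝒞C)
    (hB : IsChain (· ⊆ ·) 𝒞B) (hψ : Surjective ψ) (hmaps : ∀ S ∈ 𝒞C, ψ '' S ∈ 𝒞B) :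
    image ψ '' 𝒞C = 𝒞B := by
  refine (image_subset_iff.2 hmaps).antisymm fun E hE => ?_
  obtain ⟨S, ⟨hS, hSE⟩, hSmax⟩ := (toFinite {S | S ∈ 𝒞C ∧ ψ '' S ⊆ E}).exists_maximal
    ⟨∅, hC.empty_mem, by simp⟩
  by_cases hSuniv : S = univ
  · subst hSuniv
    exact ⟨univ, hS, hSE.antisymm (by simp [image_univ_of_surjective hψ])⟩
  obtain ⟨c, hcS, hcS𝒞⟩ := hC.exists_insert_mem hS hSuniv
  have himage : ψ '' insert c S ∈ 𝒞B := hmaps _ hcS𝒞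
  rw [image_insert_eq] at himage
  rcases hB.total himage hE with hsub | hsub
  · exact absurd (hSmax ⟨hcS𝒞, by rwa [image_insert_eq]⟩ (subset_insert c S) (mem_insert c S))
      hcS
  · by_cases hcE : ψ c ∈ E
    · exact ⟨_, hcS𝒞, by rw [image_insert_eq]; exact (insert_subset hcE hSE).antisymm hsub⟩
    · exact ⟨S, hS, hSE.antisymm ((subset_insert_iff_of_notMem hcE).1 hsub)⟩

/-- The initial segments of a linear extension `f` of the order of `A`. -/
def keyChain {A : FiniteFan} {β : Type*} [LinearOrder β] (f : A.carrier → β) :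
    Set (Set A.carrier) :=
  insert ∅ (range fun c => {x | f x ≤ f c})

theorem dcMaxChain_keyChain {A : FiniteFan} {β : Type*} [LinearOrder β] {f : A.carrier → β}
    (hf : Injective f) (hmono : Monotone f) : DCMaxChain A (keyChain f) := by
  refine ⟨?_, ?_, fun C _ hC => ?_⟩
  · rintro _ (rfl | ⟨c, rfl⟩) x y hxy hy
    exacts [hy, (hmono hxy).trans hy]
  · refine IsChain.insert ?_ fun _ _ _ => Or.inl (empty_subset _)
    rintro _ ⟨c, rfl⟩ _ ⟨d, rfl⟩ -
    rcases le_total (f c) (f d) with h | h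
    exacts [Or.inl fun x hx => le_trans hx h, Or.inr fun x hx => le_trans hx h]
  · rcases C.eq_empty_or_nonempty with rfl | hne
    · exact mem_insert _ _
    obtain ⟨c, hcC, hcmax⟩ := (toFinite C).exists_maximalFor f C hne
    refine mem_insert_of_mem _ ⟨c, subset_antisymm (fun x hx => ?_) fun x hx => ?_⟩
    · by_contra hxC
      rcases hC.total (mem_insert _ _) (mem_insert_of_mem _ (mem_insert_of_mem _ ⟨x, rfl⟩))
        with h | h
      · exact hxC (hf (le_antisymm hx (h hcC)) ▸ hcC)
      · exact hxC (h (show f x ≤ f x from le_rfl))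
    · exact (le_total (f x) (f c)).elim id (hcmax hx)

namespace Sigma

variable {ι : Type*} {α : ι → Type*} [∀ i, LinearOrder (α i)] {x y z : Σ i, α i}

theorem le_total_of_le (hx : x ≤ z) (hy : y ≤ z) : x ≤ y ∨ y ≤ x := by
  obtain ⟨i, a, c, -⟩ := hx
  obtain ⟨i, b, c, -⟩ := hy
  exact (le_total a b).imp (LE.fiber _ _ _) (LE.fiber _ _ _)

theorem le_total_of_ge (hx : z ≤ x) (hy : z ≤ y) : x ≤ y ∨ y ≤ x := by
  obtain ⟨i, c, a, -⟩ := hx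
  obtain ⟨i, c, b, -⟩ := hy
  exact (le_total a b).imp (LE.fiber _ _ _) (LE.fiber _ _ _)

end Sigma

/-- `Σ` carries the disjoint-sum order, so this is a root `⊥` below `T` disjoint chains, the `t`-th
with `n t + 1` points. -/
abbrev broom {T : ℕ} (n : Fin T → ℕ) : FiniteFan where
  carrier := WithBot (Σ t : Fin T, Fin (n t + 1))
  fintype := inferInstance
  ord := inferInstance
  root := ⊥
  root_le _ := bot_le
  down_chain a x y hx hy := by
    induction x using WithBot.recBotCoe with
    | bot => exact Or.inl bot_le
    | coe x =>
      induction y using WithBot.recBotCoe with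
      | bot => exact Or.inr bot_le
      | coe y =>
        lift a to Σ t : Fin T, Fin (n t + 1) using ne_bot_of_le_ne_bot WithBot.coe_ne_bot hx
        simp only [WithBot.coe_le_coe] at hx hy ⊢
        exact Sigma.le_total_of_le hx hy
  up_chain a ha x y hx hy := by
    lift a to Σ t : Fin T, Fin (n t + 1) using ha
    lift x to Σ t : Fin T, Fin (n t + 1) using ne_bot_of_le_ne_bot WithBot.coe_ne_bot hx
    lift y to Σ t : Fin T, Fin (n t + 1) using ne_bot_of_le_ne_bot WithBot.coe_ne_bot hy
    simp only [WithBot.coe_le_coe] at hx hy ⊢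
    exact Sigma.le_total_of_ge hx hy

namespace broom

variable {T : ℕ} {n : Fin T → ℕ}

def key : (broom n).carrier → ℕ ×ₗ ℕ :=
  WithBot.recBotCoe (toLex (0, 0)) fun x => toLex (x.1.val + 1, x.2.val)

theorem key_injective : Injective (key (n := n)) := by
  intro c d h
  induction c using WithBot.recBotCoe <;> induction d using WithBot.recBotCoe
  · rfl
  · simp [key] at h
  · simp [key] at h
  · rename_i x y
    obtain ⟨t, i⟩ := x
    obtain ⟨s, j⟩ := y
    simp only [key, WithBot.recBotCoe_coe, EmbeddingLike.apply_eq_iff_eq, Prod.mk.injEq,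
      add_left_inj, Fin.val_inj] at h
    obtain ⟨rfl, h⟩ := h
    rw [Fin.val_inj.1 h]

theorem key_mono : Monotone (key (n := n)) := by
  intro c d h
  induction c using WithBot.recBotCoe with
  | bot =>
    induction d using WithBot.recBotCoe
    · exact le_rfl
    · exact (Prod.Lex.toLex_le_toLex).2 (Or.inl (Nat.succ_pos _))
  | coe x =>
    lift d to Σ t : Fin T, Fin (n t + 1) using ne_bot_of_le_ne_bot WithBot.coe_ne_bot h
    obtain ⟨t, i, j, hij⟩ := WithBot.coe_le_coe.1 h
    exact (Prod.Lex.toLex_le_toLex).2 (Or.inr ⟨rfl, hij⟩)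

theorem covby_cases {c d : (broom n).carrier} (h : (broom n).covby c d) :
    (c = ⊥ ∧ ∃ t, d = ((⟨t, 0⟩ : Σ t, Fin (n t + 1)) : WithBot _)) ∨
      ∃ t, ∃ i j : Fin (n t + 1), c = ((⟨t, i⟩ : Σ t, Fin (n t + 1)) : WithBot _) ∧
        d = ((⟨t, j⟩ : Σ t, Fin (n t + 1)) : WithBot _) ∧ j.val = i.val + 1 := by
  rw [FiniteFan.covby_iff] at h
  lift d to Σ t : Fin T, Fin (n t + 1) using ne_bot_of_gt h.lt
  obtain ⟨t, j⟩ := d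
  induction c using WithBot.recBotCoe with
  | bot =>
    have hmin : IsMin (⟨t, j⟩ : Σ t, Fin (n t + 1)) := WithBot.bot_covBy_coe.1 h
    have hj : j ≤ 0 := (Sigma.mk_le_mk_iff (α := fun t => Fin (n t + 1))).1
      (hmin (Sigma.mk_le_mk_iff.2 (Fin.zero_le j)))
    exact Or.inl ⟨rfl, t, by rw [le_antisymm hj (Fin.zero_le j)]⟩
  | coe x =>
    have hxd := WithBot.coe_covBy_coe.1 h
    obtain ⟨t, i, j, -⟩ := hxd.lt
    have hij : i ⋖ j := ⟨(Sigma.mk_lt_mk_iff (α := fun t => Fin (n t + 1))).1 hxd.lt,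
      fun k hik hkj => hxd.2 (Sigma.mk_lt_mk_iff.2 hik) (Sigma.mk_lt_mk_iff.2 hkj)⟩
    rw [Fin.covBy_iff, Nat.covBy_iff_add_one_eq] at hij
    exact Or.inr ⟨t, i, j, rfl, rfl, hij.symm⟩

variable {B : FiniteFan} {𝒞B : Set (Set B.carrier)}

def map (lab : Fin T → ℕ → B.carrier) : (broom n).carrier → B.carrier :=
  WithBot.recBotCoe B.root fun x => lab x.1 x.2

variable {lab : Fin T → ℕ → B.carrier}

theorem image_map_mem (hB : DCMaxChain B 𝒞B) (hlab_R : ∀ t i, B.R (lab t i) (lab t (i + 1)))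
    (htop_mem : ∀ k : ℕ, (fun t => lab t (n t)) '' {t | t.val < k} ∈ 𝒞B) :
    ∀ S ∈ keyChain (key (n := n)), map lab '' S ∈ 𝒞B := by
  rintro _ (rfl | ⟨c, rfl⟩)
  · rw [image_empty]
    exact hB.empty_mem
  induction c using WithBot.recBotCoe with
  | bot =>
    convert hB.singleton_root_mem
    refine subset_antisymm ?_ (singleton_subset_iff.2 ⟨⊥, show key ⊥ ≤ key ⊥ from le_rfl, rfl⟩)
    rintro _ ⟨x, hx, rfl⟩
    induction x using WithBot.recBotCoe
    · rfl
    · exact absurd hx (by simp [key, Prod.Lex.toLex_le_toLex])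
  | coe c₀ =>
    obtain ⟨t₀, i₀⟩ := c₀
    have hP : (fun t => lab t (n t)) '' {t | t.val < t₀ + 1} =
        insert (lab t₀ (n t₀)) ((fun t => lab t (n t)) '' {t | t.val < t₀}) := by
      refine (congrArg _ ?_).trans image_insert_eq
      ext t
      simp only [mem_ofPred_eq, mem_insert_iff, Nat.lt_succ_iff_lt_or_eq, Fin.val_inj, or_comm]
    refine mem_of_subset_of_subset_insert (htop_mem t₀) (hP ▸ htop_mem (t₀ + 1)) ?_ ?_
    · rintro _ ⟨t, ht, rfl⟩
      refine ⟨((⟨t, Fin.last _⟩ : Σ t, Fin (n t + 1)) : WithBot _), ?_, rfl⟩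
      exact (Prod.Lex.toLex_le_toLex).2 (Or.inl (by simpa using ht))
    · rw [← hP]
      rintro _ ⟨x, hx, rfl⟩
      have hDC := hB.1 _ (htop_mem (t₀ + 1))
      have htop : lab t₀ (n t₀) ∈ (fun t => lab t (n t)) '' {t | t.val < t₀ + 1} :=
        hP ▸ mem_insert _ _
      induction x using WithBot.recBotCoe with
      | bot => exact hDC _ _ (B.root_le _) htop
      | coe x =>
        obtain ⟨t, i⟩ := x
        have ht : t.val < t₀.val + 1 := by
          rcases (Prod.Lex.toLex_le_toLex).1 hx with h | ⟨h, -⟩ <;> simp at h <;> omega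
        have hmono : Monotone (lab t) := monotone_nat_of_le_succ fun i => (hlab_R t i).le
        exact hDC _ _ (hmono (Nat.lt_succ_iff.1 i.isLt)) ⟨t, ht, rfl⟩

theorem fcEpi_map (hB : DCMaxChain B 𝒞B) (hlab_zero : ∀ t, lab t 0 = B.root)
    (hlab_R : ∀ t i, B.R (lab t i) (lab t (i + 1)))
    (htop_mem : ∀ k : ℕ, (fun t => lab t (n t)) '' {t | t.val < k} ∈ 𝒞B)
    (htop_surj : Surjective fun t => lab t (n t)) :
    FcEpi (broom n) B (keyChain key) 𝒞B (map lab) := by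
  have hsurj : Surjective (map (n := n) lab) := fun y => by
    obtain ⟨t, rfl⟩ := htop_surj y
    exact ⟨((⟨t, Fin.last _⟩ : Σ t, Fin (n t + 1)) : WithBot _), rfl⟩
  refine ⟨⟨hsurj, ?_⟩, image_image_eq_of_mapsTo (dcMaxChain_keyChain key_injective key_mono)
    hB.2.1 hsurj (image_map_mem hB hlab_R htop_mem)⟩
  rintro c d (rfl | hcd)
  · exact Or.inl rfl
  rcases covby_cases hcd with ⟨rfl, t, rfl⟩ | ⟨t, i, j, rfl, rfl, hij⟩
  · exact Or.inl (hlab_zero t).symm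
  · simpa [map, hij] using hlab_R t i

end broom

theorem List.image_getElem_setOf_val_lt {α β : Type*} (L : List α) (f : α → β) (k : ℕ) :
    (fun t : Fin L.length => f L[t]) '' {t | t.val < k} = f '' {x | x ∈ L.take k} := by
  ext y
  simp only [mem_image, mem_ofPred_eq, List.mem_take_iff_getElem]
  constructor
  · rintro ⟨t, ht, rfl⟩
    exact ⟨L[t], ⟨t, by omega, rfl⟩, rfl⟩
  · rintro ⟨_, ⟨i, hi, rfl⟩, rfl⟩
    exact ⟨⟨i, by omega⟩, by simp only; omega, rfl⟩

section Amalgamation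

variable {A B₁ B₂ : FiniteFan} {𝒞A : Set (Set A.carrier)} {𝒞B₁ : Set (Set B₁.carrier)}
  {𝒞B₂ : Set (Set B₂.carrier)} {φ₁ : B₁.carrier → A.carrier} {φ₂ : B₂.carrier → A.carrier}

theorem exists_merge_step (hA : IsChain (· ⊆ ·) 𝒞A) (hB₁ : DCMaxChain B₁ 𝒞B₁)
    (hB₂ : DCMaxChain B₂ 𝒞B₂) (hφ₁ : FcEpi B₁ A 𝒞B₁ 𝒞A φ₁) (hφ₂ : FcEpi B₂ A 𝒞B₂ 𝒞A φ₂)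
    {P : Set B₁.carrier} {Q : Set B₂.carrier} (hP : P ∈ 𝒞B₁) (hQ : Q ∈ 𝒞B₂)
    (hPQ : φ₁ '' P = φ₂ '' Q) (hne : P ≠ univ ∨ Q ≠ univ) :
    ∃ a b, φ₁ a = φ₂ b ∧ insert a P ∈ 𝒞B₁ ∧ insert b Q ∈ 𝒞B₂ ∧ (a ∉ P ∨ b ∉ Q) := by
  by_cases hold₁ : ∃ a ∉ P, insert a P ∈ 𝒞B₁ ∧ φ₁ a ∈ φ₁ '' P
  · obtain ⟨a, haP, ha, hφa⟩ := hold₁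
    obtain ⟨b, hbQ, hb⟩ := hPQ ▸ hφa
    exact ⟨a, b, hb.symm, ha, by rwa [insert_eq_of_mem hbQ], Or.inl haP⟩
  by_cases hold₂ : ∃ b ∉ Q, insert b Q ∈ 𝒞B₂ ∧ φ₂ b ∈ φ₂ '' Q
  · obtain ⟨b, hbQ, hb, hφb⟩ := hold₂
    obtain ⟨a, haP, ha⟩ := hPQ ▸ hφb
    exact ⟨a, b, ha, by rwa [insert_eq_of_mem haP], hb, Or.inr hbQ⟩
  push Not at hold₁ hold₂
  have hPu : P ≠ univ := by
    rintro rfl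
    obtain ⟨b, hbQ, hb⟩ := hB₂.exists_insert_mem hQ (hne.resolve_left (· rfl))
    exact hold₂ b hbQ hb (by simp [← hPQ, image_univ_of_surjective hφ₁.1.1])
  have hQu : Q ≠ univ := by
    rintro rfl
    obtain ⟨a, haP, ha⟩ := hB₁.exists_insert_mem hP hPu
    exact hold₁ a haP ha (by simp [hPQ, image_univ_of_surjective hφ₂.1.1])
  obtain ⟨a, haP, ha⟩ := hB₁.exists_insert_mem hP hPu
  obtain ⟨b, hbQ, hb⟩ := hB₂.exists_insert_mem hQ hQu
  refine ⟨a, b, ?_, ha, hb, Or.inl haP⟩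
  -- both images are one-point extensions of `φ₁ '' P` inside the chain `𝒞A`
  have ha' : insert (φ₁ a) (φ₁ '' P) ∈ 𝒞A := by
    rw [← image_insert_eq, ← hφ₁.2]
    exact mem_image_of_mem _ ha
  have hb' : insert (φ₂ b) (φ₁ '' P) ∈ 𝒞A := by
    rw [hPQ, ← image_insert_eq, ← hφ₂.2]
    exact mem_image_of_mem _ hb
  rcases hA.total ha' hb' with h | h
  · exact (h (mem_insert _ _)).resolve_right (hold₁ a haP ha)
  · exact ((h (mem_insert _ _)).resolve_right (hPQ ▸ hold₂ b hbQ hb)).symm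

theorem exists_merge_list (hA : IsChain (· ⊆ ·) 𝒞A) (hB₁ : DCMaxChain B₁ 𝒞B₁)
    (hB₂ : DCMaxChain B₂ 𝒞B₂) (hφ₁ : FcEpi B₁ A 𝒞B₁ 𝒞A φ₁) (hφ₂ : FcEpi B₂ A 𝒞B₂ 𝒞A φ₂)
    (P : Set B₁.carrier) (Q : Set B₂.carrier) (hP : P ∈ 𝒞B₁) (hQ : Q ∈ 𝒞B₂)
    (hPQ : φ₁ '' P = φ₂ '' Q) :
    ∃ L : List (B₁.carrier × B₂.carrier), (∀ x ∈ L, φ₁ x.1 = φ₂ x.2) ∧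
      (∀ k, P ∪ Prod.fst '' {x | x ∈ L.take k} ∈ 𝒞B₁) ∧
      (∀ k, Q ∪ Prod.snd '' {x | x ∈ L.take k} ∈ 𝒞B₂) ∧
      P ∪ Prod.fst '' {x | x ∈ L} = univ ∧ Q ∪ Prod.snd '' {x | x ∈ L} = univ := by
  induction hPQ' : (P, Q) using WellFoundedGT.induction generalizing P Q with
  | _ PQ ih => ?_
  subst hPQ'
  by_cases hdone : P = univ ∧ Q = univ
  · obtain ⟨rfl, rfl⟩ := hdone
    exact ⟨[], by simp, by simpa using hP, by simpa using hQ, by simp, by simp⟩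
  obtain ⟨a, b, hab, ha, hb, hprog⟩ :=
    exists_merge_step hA hB₁ hB₂ hφ₁ hφ₂ hP hQ hPQ (not_and_or.1 hdone)
  have hlt : (P, Q) < (insert a P, insert b Q) := by
    rcases hprog with h | h
    · exact Prod.lt_iff.2 (Or.inl ⟨ssubset_insert h, subset_insert b Q⟩)
    · exact Prod.lt_iff.2 (Or.inr ⟨subset_insert a P, ssubset_insert h⟩)
  obtain ⟨L, hLφ, hL₁, hL₂, hLu₁, hLu₂⟩ :=
    ih _ hlt _ _ ha hb (by simp only [image_insert_eq, hab, hPQ]) rfl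
  have hfst : ∀ (S : Set B₁.carrier) l,
      S ∪ Prod.fst '' {x | x ∈ (a, b) :: l} = insert a S ∪ Prod.fst '' {x | x ∈ l} := by
    intro S l
    ext
    simp only [mem_union, mem_insert_iff, mem_image, mem_ofPred_eq, List.mem_cons]
    grind
  have hsnd : ∀ (S : Set B₂.carrier) l,
      S ∪ Prod.snd '' {x | x ∈ (a, b) :: l} = insert b S ∪ Prod.snd '' {x | x ∈ l} := by
    intro S l
    ext
    simp only [mem_union, mem_insert_iff, mem_image, mem_ofPred_eq, List.mem_cons]
    grind
  refine ⟨(a, b) :: L, List.forall_mem_cons.2 ⟨hab, hLφ⟩, ?_, ?_, by rwa [hfst], by rwa [hsnd]⟩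
  · rintro (_ | k)
    · simpa using hP
    · rw [List.take_succ_cons, hfst]
      exact hL₁ k
  · rintro (_ | k)
    · simpa using hQ
    · rw [List.take_succ_cons, hsnd]
      exact hL₂ k

theorem exists_merge (hA : IsChain (· ⊆ ·) 𝒞A) (hB₁ : DCMaxChain B₁ 𝒞B₁)
    (hB₂ : DCMaxChain B₂ 𝒞B₂) (hφ₁ : FcEpi B₁ A 𝒞B₁ 𝒞A φ₁) (hφ₂ : FcEpi B₂ A 𝒞B₂ 𝒞A φ₂) :
    ∃ (T : ℕ) (p : Fin T → B₁.carrier × B₂.carrier), (∀ t, φ₁ (p t).1 = φ₂ (p t).2) ∧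
      (∀ k : ℕ, (fun t => (p t).1) '' {t | t.val < k} ∈ 𝒞B₁) ∧
      (∀ k : ℕ, (fun t => (p t).2) '' {t | t.val < k} ∈ 𝒞B₂) ∧
      Surjective (fun t => (p t).1) ∧ Surjective (fun t => (p t).2) := by
  obtain ⟨L, hLφ, hL₁, hL₂, hLu₁, hLu₂⟩ := exists_merge_list hA hB₁ hB₂ hφ₁ hφ₂ ∅ ∅
    hB₁.empty_mem hB₂.empty_mem (by simp)
  have hsurj : ∀ {β : Type} (f : B₁.carrier × B₂.carrier → β),
      f '' {x | x ∈ L} = univ → Surjective fun t : Fin L.length => f L[t] := by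
    intro β f hf y
    obtain ⟨t, -, ht⟩ := (L.image_getElem_setOf_val_lt f L.length).symm ▸
      (L.take_length ▸ hf) ▸ mem_univ y
    exact ⟨t, ht⟩
  refine ⟨L.length, fun t => L[t], fun t => hLφ _ (List.getElem_mem _), fun k => ?_, fun k => ?_,
    hsurj _ (by simpa using hLu₁), hsurj _ (by simpa using hLu₂)⟩
  · simpa only [empty_union, ← L.image_getElem_setOf_val_lt] using hL₁ k
  · simpa only [empty_union, ← L.image_getElem_setOf_val_lt] using hL₂ k

structure IsSyncWalk (φ₁ : B₁.carrier → A.carrier) (φ₂ : B₂.carrier → A.carrier)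
    (w : ℕ → B₁.carrier × B₂.carrier) : Prop where
  zero : w 0 = (B₁.root, B₂.root)
  step : ∀ i, B₁.R (w i).1 (w (i + 1)).1 ∧ B₂.R (w i).2 (w (i + 1)).2
  compat : ∀ i, φ₁ (w i).1 = φ₂ (w i).2

theorem IsSyncWalk.extend {w : ℕ → B₁.carrier × B₂.carrier} (hw : IsSyncWalk φ₁ φ₂ w) {m : ℕ}
    {p : B₁.carrier} {q : B₂.carrier} (hp : B₁.R (w m).1 p) (hq : B₂.R (w m).2 q)
    (hpq : φ₁ p = φ₂ q) : IsSyncWalk φ₁ φ₂ fun i => if i ≤ m then w i else (p, q) where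
  zero := by simpa using hw.zero
  step i := by
    rcases lt_trichotomy i m with h | rfl | h
    · simpa [h.le, Nat.succ_le_of_lt h] using hw.step i
    · simpa using ⟨hp, hq⟩
    · simp [h.not_ge, (h.trans (Nat.lt_succ_self i)).not_ge, FiniteFan.R]
  compat i := by
    by_cases h : i ≤ m
    · simpa [h] using hw.compat i
    · simpa [h] using hpq

theorem exists_isSyncWalk (hA : DCMaxChain A 𝒞A) (hB₁ : DCMaxChain B₁ 𝒞B₁)
    (hB₂ : DCMaxChain B₂ 𝒞B₂) (hφ₁ : FcEpi B₁ A 𝒞B₁ 𝒞A φ₁) (hφ₂ : FcEpi B₂ A 𝒞B₂ 𝒞A φ₂)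
    (x : B₁.carrier × B₂.carrier) (hx : φ₁ x.1 = φ₂ x.2) :
    ∃ (m : ℕ) (w : ℕ → B₁.carrier × B₂.carrier), IsSyncWalk φ₁ φ₂ w ∧ w m = x := by
  induction x using WellFoundedLT.induction with
  | _ x ih => ?_
  obtain ⟨p, q⟩ := x
  have extend : ∀ p' q', (p', q') < (p, q) → B₁.R p' p → B₂.R q' q → φ₁ p' = φ₂ q' →
      ∃ (m : ℕ) (w : ℕ → B₁.carrier × B₂.carrier), IsSyncWalk φ₁ φ₂ w ∧ w m = (p, q) := by
    intro p' q' hlt hp hq hpq'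
    obtain ⟨m, w, hw, hwm⟩ := ih _ hlt hpq'
    exact ⟨m + 1, _, hw.extend (by rwa [hwm]) (by rwa [hwm]) hx, by simp⟩
  by_cases hp : ∃ p', B₁.covby p' p ∧ φ₁ p' = φ₁ p
  · obtain ⟨p', hp', hφp'⟩ := hp
    exact extend p' q (Prod.lt_iff.2 (Or.inl ⟨hp'.1, le_rfl⟩)) (Or.inr hp') (Or.inl rfl)
      (hφp'.trans hx)
  by_cases hq : ∃ q', B₂.covby q' q ∧ φ₂ q' = φ₂ q
  · obtain ⟨q', hq', hφq'⟩ := hq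
    exact extend p q' (Prod.lt_iff.2 (Or.inr ⟨le_rfl, hq'.1⟩)) (Or.inl rfl) (Or.inr hq')
      (hx.trans hφq'.symm)
  by_cases hroot : p = B₁.root ∧ q = B₂.root
  · obtain ⟨rfl, rfl⟩ := hroot
    exact ⟨0, fun _ => (B₁.root, B₂.root), ⟨rfl, fun _ => ⟨Or.inl rfl, Or.inl rfl⟩,
      fun _ => hx⟩, rfl⟩
  -- Neither side can step down without moving its image, so both parents map to the parent
  -- of `φ₁ p = φ₂ q`.
  have hpar₁ : ∀ p', B₁.covby p' p → A.covby (φ₁ p') (φ₁ p) := fun p' h =>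
    (hφ₁.1.2 _ _ (Or.inr h)).resolve_left fun he => hp ⟨p', h, he⟩
  have hpar₂ : ∀ q', B₂.covby q' q → A.covby (φ₂ q') (φ₂ q) := fun q' h =>
    (hφ₂.1.2 _ _ (Or.inr h)).resolve_left fun he => hq ⟨q', h, he⟩
  have hp_ne : p ≠ B₁.root := by
    rintro rfl
    obtain ⟨q', hq'⟩ := FiniteFan.exists_covby_of_ne_root fun h => hroot ⟨rfl, h⟩
    have := hpar₂ q' hq'
    rw [← hx, hφ₁.map_root hA hB₁] at this
    exact FiniteFan.not_covby_root _ this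
  have hq_ne : q ≠ B₂.root := by
    rintro rfl
    obtain ⟨p', hp'⟩ := FiniteFan.exists_covby_of_ne_root hp_ne
    have := hpar₁ p' hp'
    rw [hx, hφ₂.map_root hA hB₂] at this
    exact FiniteFan.not_covby_root _ this
  obtain ⟨p', hp'⟩ := FiniteFan.exists_covby_of_ne_root hp_ne
  obtain ⟨q', hq'⟩ := FiniteFan.exists_covby_of_ne_root hq_ne
  exact extend p' q' (Prod.lt_iff.2 (Or.inl ⟨hp'.1, hq'.1.le⟩)) (Or.inr hp') (Or.inr hq')
    (FiniteFan.eq_of_covby_of_covby (hpar₁ p' hp') (hx ▸ hpar₂ q' hq'))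

theorem amalgamation (hA : DCMaxChain A 𝒞A) (hB₁ : DCMaxChain B₁ 𝒞B₁)
    (hB₂ : DCMaxChain B₂ 𝒞B₂) (hφ₁ : FcEpi B₁ A 𝒞B₁ 𝒞A φ₁) (hφ₂ : FcEpi B₂ A 𝒞B₂ 𝒞A φ₂) :
    ∃ (C : FiniteFan) (𝒞C : Set (Set C.carrier))
      (ψ₁ : C.carrier → B₁.carrier) (ψ₂ : C.carrier → B₂.carrier),
      DCMaxChain C 𝒞C ∧ FcEpi C B₁ 𝒞C 𝒞B₁ ψ₁ ∧ FcEpi C B₂ 𝒞C 𝒞B₂ ψ₂ ∧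
        φ₁ ∘ ψ₁ = φ₂ ∘ ψ₂ := by
  obtain ⟨T, p, hpφ, hp₁, hp₂, hsurj₁, hsurj₂⟩ := exists_merge hA.2.1 hB₁ hB₂ hφ₁ hφ₂
  choose m w hw hwm using fun t => exists_isSyncWalk hA hB₁ hB₂ hφ₁ hφ₂ (p t) (hpφ t)
  refine ⟨broom m, keyChain broom.key, broom.map fun t i => (w t i).1,
    broom.map fun t i => (w t i).2, dcMaxChain_keyChain broom.key_injective broom.key_mono,
    broom.fcEpi_map hB₁ (fun t => by simp [(hw t).zero]) (fun t i => ((hw t).step i).1)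
      (by simpa [hwm] using hp₁) (by simpa [hwm] using hsurj₁),
    broom.fcEpi_map hB₂ (fun t => by simp [(hw t).zero]) (fun t i => ((hw t).step i).2)
      (by simpa [hwm] using hp₂) (by simpa [hwm] using hsurj₂), funext fun c => ?_⟩
  induction c using WithBot.recBotCoe with
  | bot => exact (hφ₁.map_root hA hB₁).trans (hφ₂.map_root hA hB₂).symm
  | coe x => exact (hw x.1).compat x.2

end Amalgamation

theorem fcEpi_const_broom_zero {B : FiniteFan} {𝒞B : Set (Set B.carrier)}
    (hB : DCMaxChain B 𝒞B) :
    FcEpi B (broom Fin.elim0) 𝒞B (keyChain broom.key) fun _ => ⊥ := by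
  have hpoint : ∀ c : (broom Fin.elim0).carrier, c = ⊥ := fun c => by
    induction c using WithBot.recBotCoe with
    | bot => rfl
    | coe x => exact x.1.elim0
  have hsurj : Surjective fun _ : B.carrier => (⊥ : (broom Fin.elim0).carrier) :=
    fun c => ⟨B.root, (hpoint c).symm⟩
  have hchain := dcMaxChain_keyChain (broom.key_injective (n := Fin.elim0)) broom.key_mono
  refine ⟨⟨hsurj, fun _ _ _ => Or.inl rfl⟩,
    image_image_eq_of_mapsTo hB hchain.2.1 hsurj fun S _ => ?_⟩
  rcases S.eq_empty_or_nonempty with rfl | hS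
  · rw [image_empty]
    exact hchain.empty_mem
  · rw [hS.image_const, eq_univ_of_forall (mem_singleton_of_eq <| hpoint ·)]
    exact hchain.univ_mem

theorem joint_projection {A B : FiniteFan} {𝒞A : Set (Set A.carrier)}
    {𝒞B : Set (Set B.carrier)} (hA : DCMaxChain A 𝒞A) (hB : DCMaxChain B 𝒞B) :
    ∃ (C : FiniteFan) (𝒞C : Set (Set C.carrier))
      (φ : C.carrier → A.carrier) (ψ : C.carrier → B.carrier),
      DCMaxChain C 𝒞C ∧ FcEpi C A 𝒞C 𝒞A φ ∧ FcEpi C B 𝒞C 𝒞B ψ := by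
  obtain ⟨C, 𝒞C, φ, ψ, hC, hφ, hψ, -⟩ := amalgamation
    (dcMaxChain_keyChain broom.key_injective broom.key_mono) hA hB
    (fcEpi_const_broom_zero hA) (fcEpi_const_broom_zero hB)
  exact ⟨C, 𝒞C, φ, ψ, hC, hφ, hψ⟩

/-- The class `F_c` of finite fans equipped with downwards closed maximal
chains, with chain-preserving epimorphisms, has the JPP and the AP. -/
theorem stmt_6 :
    (∀ (A B : FiniteFan) (𝒞A : Set (Set A.carrier)) (𝒞B : Set (Set B.carrier)),
      DCMaxChain A 𝒞A → DCMaxChain B 𝒞B →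
      ∃ (C : FiniteFan) (𝒞C : Set (Set C.carrier))
        (φ : C.carrier → A.carrier) (ψ : C.carrier → B.carrier),
        DCMaxChain C 𝒞C ∧ FcEpi C A 𝒞C 𝒞A φ ∧ FcEpi C B 𝒞C 𝒞B ψ) ∧
    (∀ (A B₁ B₂ : FiniteFan) (𝒞A : Set (Set A.carrier))
      (𝒞B₁ : Set (Set B₁.carrier)) (𝒞B₂ : Set (Set B₂.carrier))
      (φ₁ : B₁.carrier → A.carrier) (φ₂ : B₂.carrier → A.carrier),
      DCMaxChain A 𝒞A → DCMaxChain B₁ 𝒞B₁ → DCMaxChain B₂ 𝒞B₂ →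
      FcEpi B₁ A 𝒞B₁ 𝒞A φ₁ → FcEpi B₂ A 𝒞B₂ 𝒞A φ₂ →
      ∃ (C : FiniteFan) (𝒞C : Set (Set C.carrier))
        (ψ₁ : C.carrier → B₁.carrier) (ψ₂ : C.carrier → B₂.carrier),
        DCMaxChain C 𝒞C ∧ FcEpi C B₁ 𝒞C 𝒞B₁ ψ₁ ∧ FcEpi C B₂ 𝒞C 𝒞B₂ ψ₂ ∧
        φ₁ ∘ ψ₁ = φ₂ ∘ ψ₂) :=
  ⟨fun _ _ _ _ => joint_projection, fun _ _ _ _ _ _ _ _ => amalgamation⟩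
end

section
/- The expansion F_c of the class F of finite fans is reasonable: for any finite fans A and B, any fan epimorphism φ: B → A, and any downwards closed maximal chain 𝒞^A on A, there exists a downwards closed maximal chain 𝒞^B on B such that φ: (B, 𝒞^B) → (A, 𝒞^A) is an epimorphism in F_c, i.e., {φ(C) : C ∈ 𝒞^B} = 𝒞^A. -/
attribute [local instance] FiniteFan.ord

namespace FanEpi

variable {B A : FiniteFan} {φ : B.carrier → A.carrier}

theorem monotone (hφ : FanEpi B A φ) : Monotone φ := by
  classical
  have : LocallyFiniteOrder B.carrier := Fintype.toLocallyFiniteOrder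
  refine (monotone_iff_forall_covBy φ).2 fun s t hst => ?_
  rcases hφ.2 s t (Or.inr hst) with h | h
  · exact h.le
  · exact h.1.le

end FanEpi

namespace FiniteFan

variable {A : FiniteFan}

theorem DownClosed.preimage {B : FiniteFan} {φ : B.carrier → A.carrier} (hφ : Monotone φ)
    {C : Set A.carrier} (hC : A.DownClosed C) : B.DownClosed (φ ⁻¹' C) :=
  fun x y hxy hy => hC (φ x) (φ y) (hφ hxy) hy

theorem DownClosed.sUnion {𝒮 : Set (Set A.carrier)} (h𝒮 : ∀ C ∈ 𝒮, A.DownClosed C) :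
    A.DownClosed (⋃₀ 𝒮) := by
  rintro x y hxy ⟨C, hC, hy⟩
  exact ⟨C, hC, h𝒮 C hC x y hxy hy⟩

theorem DownClosed.sInter {𝒮 : Set (Set A.carrier)} (h𝒮 : ∀ C ∈ 𝒮, A.DownClosed C) :
    A.DownClosed (⋂₀ 𝒮) :=
  fun x y hxy hy C hC => h𝒮 C hC x y hxy (hy C hC)

theorem DownClosed.insert_of_minimal {C E : Set A.carrier} (hC : A.DownClosed C)
    (hE : A.DownClosed E) {x : A.carrier} (hx : Minimal (· ∈ E \ C) x) :
    A.DownClosed (insert x C) := by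
  rintro y z hyz (rfl | hz)
  · by_cases hy : y ∈ C
    · exact Or.inr hy
    · exact Or.inl (hx.eq_of_le ⟨hE y _ hyz hx.1.1, hy⟩ hyz)
  · exact Or.inr (hC y z hyz hz)

end FiniteFan

namespace DCMaxChain

variable {A : FiniteFan} {𝒞 : Set (Set A.carrier)}

theorem mem_of_downClosed (h𝒞 : DCMaxChain A 𝒞) {C : Set A.carrier} (hC : A.DownClosed C)
    (hcomp : ∀ E ∈ 𝒞, E ⊆ C ∨ C ⊆ E) : C ∈ 𝒞 :=
  h𝒞.2.2 C hC <| h𝒞.2.1.insert fun E hE _ => (hcomp E hE).symm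

theorem mem_of_forall_comparable (h𝒞 : DCMaxChain A 𝒞) {S : Set A.carrier}
    (hS : ∀ E ∈ 𝒞, E ⊆ S ∨ S ⊆ E) : S ∈ 𝒞 := by
  set below := ⋃₀ {E ∈ 𝒞 | E ⊆ S}
  set above := ⋂₀ {E ∈ 𝒞 | S ⊆ E}
  have hbelow : A.DownClosed below := FiniteFan.DownClosed.sUnion fun E hE => h𝒞.1 E hE.1
  have habove : A.DownClosed above := FiniteFan.DownClosed.sInter fun E hE => h𝒞.1 E hE.1
  have hbelow_sub : below ⊆ S := Set.sUnion_subset fun E hE => hE.2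
  have hsub_above : S ⊆ above := Set.subset_sInter fun E hE => hE.2
  have le_below : ∀ E ∈ 𝒞, E ⊆ S → E ⊆ below := fun E hE h => Set.subset_sUnion_of_mem ⟨hE, h⟩
  have above_le : ∀ E ∈ 𝒞, S ⊆ E → above ⊆ E := fun E hE h => Set.sInter_subset_of_mem ⟨hE, h⟩
  by_cases hSb : S ⊆ below
  · rw [← hbelow_sub.antisymm hSb]
    exact h𝒞.mem_of_downClosed hbelow fun E hE => (hS E hE).imp (le_below E hE) hbelow_sub.trans
  obtain ⟨s, hsS, hsb⟩ := Set.not_subset.1 hSb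
  -- `insert x below` is the successor of `below` in `𝒞`, so it must equal `S`.
  obtain ⟨x, hx⟩ := (Set.toFinite (above \ below)).exists_minimal ⟨s, hsub_above hsS, hsb⟩
  have hins : insert x below ∈ 𝒞 := h𝒞.mem_of_downClosed
    (hbelow.insert_of_minimal habove hx) fun E hE => (hS E hE).imp
      (fun h => (le_below E hE h).trans (Set.subset_insert x below))
      (fun h => Set.insert_subset (above_le E hE h hx.1.1) (hbelow_sub.trans h))
  rcases hS _ hins with h | h
  · exact absurd (le_below _ hins h (Set.mem_insert x below)) hx.1.2
  · have hsx : s = x := (h hsS).resolve_right hsb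
    rwa [h.antisymm (Set.insert_subset (hsx ▸ hsS) hbelow_sub)]

theorem exists_superset (P : Set (Set A.carrier)) (hP : ∀ C ∈ P, A.DownClosed C)
    (hPchain : IsChain (· ⊆ ·) P) : ∃ 𝒞, DCMaxChain A 𝒞 ∧ P ⊆ 𝒞 := by
  let extensions : Set (Set (Set A.carrier)) :=
    {𝒟 | P ⊆ 𝒟 ∧ (∀ C ∈ 𝒟, A.DownClosed C) ∧ IsChain (· ⊆ ·) 𝒟}
  obtain ⟨𝒞, ⟨hP𝒞, h𝒞dc, h𝒞chain⟩, hmax⟩ :=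
    extensions.toFinite.exists_maximal ⟨P, subset_rfl, hP, hPchain⟩
  refine ⟨𝒞, ⟨h𝒞dc, h𝒞chain, fun C hC hchain => ?_⟩, hP𝒞⟩
  have hext : insert C 𝒞 ⊆ 𝒞 := hmax
    ⟨hP𝒞.trans (Set.subset_insert C 𝒞), Set.forall_mem_insert.2 ⟨hC, h𝒞dc⟩, hchain⟩
    (Set.subset_insert C 𝒞)
  exact hext (Set.mem_insert C 𝒞)

end DCMaxChain

/-- The expansion `F_c` of the class of finite fans is reasonable. -/
theorem stmt_8 (A B : FiniteFan) (φ : B.carrier → A.carrier) (hφ : FanEpi B A φ)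
    (𝒞A : Set (Set A.carrier)) (hA : DCMaxChain A 𝒞A) :
    ∃ 𝒞B : Set (Set B.carrier), DCMaxChain B 𝒞B ∧ FcEpi B A 𝒞B 𝒞A φ := by
  obtain ⟨𝒞B, hB, hpre⟩ := DCMaxChain.exists_superset ((φ ⁻¹' ·) '' 𝒞A)
    (Set.forall_mem_image.2 fun C hC => (hA.1 C hC).preimage hφ.monotone)
    (hA.2.1.image_of_map_rel _ _ _ fun _ _ h => Set.preimage_mono h)
  refine ⟨𝒞B, hB, hφ, Set.Subset.antisymm ?_ fun C hC => ⟨φ ⁻¹' C, hpre ⟨C, hC, rfl⟩,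
    Set.image_preimage_eq C hφ.1⟩⟩
  rintro _ ⟨D, hD, rfl⟩
  refine hA.mem_of_forall_comparable fun C hC => ?_
  rcases hB.2.1.total (hpre ⟨C, hC, rfl⟩) hD with h | h
  · exact Or.inl ((Set.image_preimage_eq C hφ.1).symm.trans_subset (Set.image_mono h))
  · exact Or.inr (Set.image_subset_iff.2 h)
end
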